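/- Let each node u of a graph G output a label which is either Error or (pointer, p) for p ∈ {L, R, P, ChR}, subject to: if u outputs (pointer, p), then u has an incident half-edge labeled p, and letting v = f(u,p), either v outputs Error, or v outputs (pointer, p') with f(v,p') ≠ u and (p ∈ {L,R} ⇒ p' = p; p = P ⇒ p' ∈ {P,L,R}; p = ChR ⇒ p' ∈ {ChR,L,R}). Then any maximal walk following the pointers either terminates at an Error node, or the sequence of pointer labels along it matches the regular expression (P* | ChR*)(L* | R*). -/
import Mathlib


/-- The pointer labels used in the pointer-chaining output. -/
inductive Ptr | L | R | P | ChR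
deriving DecidableEq

/-- The possible outputs: `error` or a pointer label. -/
inductive POut | error | ptr (p : Ptr)
deriving DecidableEq

/-- Compatibility of consecutive pointer labels:
`L → L`, `R → R`, `P → {P,L,R}`, `ChR → {ChR,L,R}`. -/
def ptrCompat : Ptr → Ptr → Prop
  | Ptr.L, p' => p' = Ptr.L
  | Ptr.R, p' => p' = Ptr.R
  | Ptr.P, p' => p' = Ptr.P ∨ p' = Ptr.L ∨ p' = Ptr.R
  | Ptr.ChR, p' => p' = Ptr.ChR ∨ p' = Ptr.L ∨ p' = Ptr.R

/-- Under the pointer-chaining constraints (a node outputting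
`(pointer,p)` has a `p`-labeled half-edge leading to a node that either outputs
`Error` or outputs a compatible pointer not pointing back), the sequence of
pointer labels along any pointer walk matches the regular expression
`(P* | ChR*)(L* | R*)`. -/
theorem stmt12 {V : Type*} (out : V → POut) (f : V → Ptr → Option V)
    (hcons : ∀ u p, out u = POut.ptr p →
      ∃ v, f u p = some v ∧
        (out v = POut.error ∨
          ∃ p', out v = POut.ptr p' ∧ f v p' ≠ some u ∧ ptrCompat p p'))
    (m : ℕ) (v : ℕ → V) (p : ℕ → Ptr)
    (hwalk : ∀ i < m, out (v i) = POut.ptr (p i) ∧ f (v i) (p i) = some (v (i + 1))) :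
    ∃ j ≤ m,
      ((∀ i < j, p i = Ptr.P) ∨ (∀ i < j, p i = Ptr.ChR)) ∧
      ((∀ i, j ≤ i → i < m → p i = Ptr.L) ∨ (∀ i, j ≤ i → i < m → p i = Ptr.R)) := by

  classical
  -- consecutive labels are compatible
  have hcompat : ∀ i, i + 1 < m → ptrCompat (p i) (p (i + 1)) := by
    intro i hi
    obtain ⟨ho, hf⟩ := hwalk i (Nat.lt_of_succ_lt hi)
    obtain ⟨w, hw, hcase⟩ := hcons (v i) (p i) ho
    have hweq : w = v (i + 1) := by
      have := hw.symm.trans hf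
      exact Option.some.inj this
    obtain ⟨ho', _⟩ := hwalk (i + 1) hi
    rcases hcase with herr | ⟨p', hp', _, hc⟩
    · rw [hweq, ho'] at herr; exact absurd herr (by simp)
    · rw [hweq, ho'] at hp'
      have : p' = p (i + 1) := by injection hp'.symm
      rwa [this] at hc
  -- once a label is L (resp. R), it stays L (resp. R)
  have hsuff : ∀ q, (q = Ptr.L ∨ q = Ptr.R) → ∀ j, j < m → p j = q →
      ∀ i, j ≤ i → i < m → p i = q := by
    intro q hq j hj hpj i
    induction i with
    | zero => intro hji _; have : j = 0 := Nat.le_zero.mp hji; rwa [← this]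
    | succ n ih =>
      intro hji hi
      rcases Nat.lt_or_ge j (n + 1) with hlt | hge
      · have hn : p n = q := ih (Nat.lt_succ_iff.mp hlt) (Nat.lt_of_succ_lt hi)
        have hc := hcompat n hi
        rcases hq with h | h <;> rw [hn, h] at hc <;> simp [ptrCompat] at hc <;>
          rw [hc, h]
      · have : j = n + 1 := Nat.le_antisymm hji hge
        rwa [← this]
  by_cases h : ∃ i, i < m ∧ (p i = Ptr.L ∨ p i = Ptr.R)
  · set j := Nat.find h with hjdef
    obtain ⟨hjm, hjlr⟩ := Nat.find_spec h
    have hmin : ∀ i < j, ¬(p i = Ptr.L ∨ p i = Ptr.R) := by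
      intro i hij hlr
      exact Nat.find_min h hij ⟨Nat.lt_trans hij hjm, hlr⟩
    have hconst : ∀ i, i < j → p i = p 0 := by
      intro i
      induction i with
      | zero => intro _; rfl
      | succ n ih =>
        intro hi
        have hn : p n = p 0 := ih (Nat.lt_of_succ_lt hi)
        have hc := hcompat n (Nat.lt_of_lt_of_le hi (Nat.le_of_lt hjm))
        have hnl := hmin (n + 1) hi
        push_neg at hnl
        have hnlr := hmin n (Nat.lt_of_succ_lt hi)
        push_neg at hnlr
        rcases hq : p n with _ | _ | _ | _ <;> rw [hq] at hc hnlr <;>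
          simp [ptrCompat] at hc <;> first
          | exact absurd rfl hnlr.1
          | exact absurd rfl hnlr.2
          | (rcases hc with hc | hc | hc
             · rw [hc, ← hq, hn]
             · exact absurd hc hnl.1
             · exact absurd hc hnl.2)
    refine ⟨j, Nat.le_of_lt hjm, ?_, ?_⟩
    · rcases Nat.eq_zero_or_pos j with hz | hpos
      · left; intro i hi; omega
      · have h0 := hmin 0 hpos
        push_neg at h0
        rcases hq0 : p 0 with _ | _ | _ | _
        · exact absurd hq0 h0.1
        · exact absurd hq0 h0.2
        · left; intro i hi; rw [hconst i hi, hq0]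
        · right; intro i hi; rw [hconst i hi, hq0]
    · rcases hjlr with hl | hr
      · left; exact hsuff Ptr.L (Or.inl rfl) j hjm hl
      · right; exact hsuff Ptr.R (Or.inr rfl) j hjm hr
  · push_neg at h
    have hconst : ∀ i, i < m → p i = p 0 := by
      intro i
      induction i with
      | zero => intro _; rfl
      | succ n ih =>
        intro hi
        have hn : p n = p 0 := ih (Nat.lt_of_succ_lt hi)
        have hc := hcompat n hi
        have hnl := h (n + 1) hi
        have hnlr := h n (Nat.lt_of_succ_lt hi)
        rcases hq : p n with _ | _ | _ | _ <;> rw [hq] at hc hnlr <;>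
          simp [ptrCompat] at hc <;> first
          | exact absurd rfl hnlr.1
          | exact absurd rfl hnlr.2
          | (rcases hc with hc | hc | hc
             · rw [hc, ← hq, hn]
             · exact absurd hc hnl.1
             · exact absurd hc hnl.2)
    refine ⟨m, le_refl m, ?_, Or.inl (fun i h1 h2 => absurd h2 (Nat.not_lt.mpr h1))⟩
    rcases Nat.eq_zero_or_pos m with hz | hpos
    · left; intro i hi; omega
    · have h0 := h 0 hpos
      rcases hq0 : p 0 with _ | _ | _ | _
      · exact absurd hq0 h0.1
      · exact absurd hq0 h0.2
      · left; intro i hi; rw [hconst i hi, hq0]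
      · right; intro i hi; rw [hconst i hi, hq0]
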